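/- arXiv:2510.03429 — 6 statements merged into one kernel-verified Lean document; each statement's English description precedes it below -/
import Mathlib

section
/- Let k be a commutative ring, n ≥ 1, F the free group on n generators t_1, …, t_n, and Λ = MonoidAlgebra k F its group algebra. Let ε : Λ → k be the augmentation (the k-algebra homomorphism sending every group element of F to 1) and let I be the kernel of ε, regarded as a k-submodule of Λ (it is a two-sided ideal, the augmentation ideal). Then the intersection of all powers of I is zero: ⨅ (m : ℕ), I^(m+1) = ⊥, where powers are taken under submodule multiplication in the k-algebra Λ. Consequently the I-adic ideal topology on Λ is Hausdorff. -/
/-!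
For a letter `a = t_i^{±1}` let `∂_a : k[F] → k[F]` be the Fox derivative with respect to the free
basis element `a`. It is `k`-linear with `∂_a(xy) = ε(y) ∂_a x + x ∂_a y`, so it maps `I^(m+2)`
into `I^(m+1)` and preserves `I^ω = ⋂ₘ I^(m+1)`. For either sign `b`,
`x = ε(x) + ∑ᵢ ∂_{t_i^b}(x) (t_i^b - 1)`, so an element of `I^ω` all of whose derivatives of one
sign vanish is zero.

On a reduced word `w`, `∂_a w` is `-w` modulo shorter words when `w` ends in `a⁻¹`, and consists
of shorter words otherwise. Let `x ∈ I^ω` have support in the words of length `< L` together with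
a finite set `T` of words of length `L`. If all words of `T` end in the same letter `t_i^b`, the
derivatives of sign `b` remove `T` altogether; otherwise each derivative of sign `+` keeps only
a proper subset of `T`. Induction on `L` and then on `T` gives `x = 0`.
-/

noncomputable def freeGroupAug (k : Type*) [CommRing k] (n : ℕ) :
    MonoidAlgebra k (FreeGroup (Fin n)) →ₐ[k] k :=
  MonoidAlgebra.lift k k (FreeGroup (Fin n)) 1

section AugmentationIdeal

variable {k A : Type*} [CommRing k] [Ring A] [Algebra k A] (ε : A →ₐ[k] k)

theorem ker_pow_succ_mul_top_le (m : ℕ) :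
    LinearMap.ker ε.toLinearMap ^ (m + 1) * ⊤ ≤ LinearMap.ker ε.toLinearMap ^ (m + 1) := by
  have hker : LinearMap.ker ε.toLinearMap * ⊤ ≤ LinearMap.ker ε.toLinearMap :=
    Submodule.mul_le.mpr fun x hx y _ => by simp_all
  rw [pow_succ, mul_assoc]
  exact mul_le_mul' le_rfl hker

theorem map_mem_iInf_ker_pow {D : A →ₗ[k] A} (hD : ∀ x y, D (x * y) = ε y • D x + x * D y)
    {x : A} (hx : x ∈ ⨅ m : ℕ, LinearMap.ker ε.toLinearMap ^ (m + 1)) :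
    D x ∈ ⨅ m : ℕ, LinearMap.ker ε.toLinearMap ^ (m + 1) := by
  simp only [Submodule.mem_iInf] at hx ⊢
  intro m
  have hle : LinearMap.ker ε.toLinearMap ^ (m + 1 + 1) ≤
      (LinearMap.ker ε.toLinearMap ^ (m + 1)).comap D := by
    rw [pow_succ, Submodule.mul_le]
    intro y hy z hz
    rw [Submodule.mem_comap, hD, show ε z = 0 from hz, zero_smul, zero_add]
    exact ker_pow_succ_mul_top_le ε m (Submodule.mul_mem_mul hy Submodule.mem_top)
  exact hle (hx (m + 1))

theorem mem_ker_of_mem_iInf_ker_pow {x : A}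
    (hx : x ∈ ⨅ m : ℕ, LinearMap.ker ε.toLinearMap ^ (m + 1)) : ε x = 0 := by
  simpa using (Submodule.mem_iInf _).mp hx 0

end AugmentationIdeal

theorem Finset.exists_forall_filter_ssubset {α ι : Type*} [DecidableEq ι] {T : Finset α}
    (hT : T.Nonempty) (f : α → Option (ι × Bool)) :
    ∃ b : Bool, ∀ i, T.filter (fun w => f w = some (i, !b)) ⊂ T := by
  by_cases hconst : ∃ i b, ∀ w ∈ T, f w = some (i, b)
  · obtain ⟨_, b, hb⟩ := hconst
    obtain ⟨w, hw⟩ := hT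
    exact ⟨b, fun i => Finset.filter_ssubset.mpr ⟨w, hw, by simp [hb w hw]⟩⟩
  · push Not at hconst
    exact ⟨true, fun i => Finset.filter_ssubset.mpr (hconst i false)⟩

theorem FreeGroup.mk_singleton_true {ι : Type*} (j : ι) :
    FreeGroup.mk [(j, true)] = FreeGroup.of j :=
  rfl

theorem FreeGroup.mk_singleton_false {ι : Type*} (j : ι) :
    FreeGroup.mk [(j, false)] = (FreeGroup.of j)⁻¹ := by
  simp [FreeGroup.of, FreeGroup.inv_mk, FreeGroup.invRev]

noncomputable section

namespace MonoidAlgebra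

def augmentation (k G : Type*) [CommRing k] [Monoid G] : MonoidAlgebra k G →ₐ[k] k :=
  lift k k G 1

@[simp] theorem augmentation_of {k G : Type*} [CommRing k] [Monoid G] (g : G) :
    augmentation k G (of k G g) = 1 := by
  simp [augmentation]

variable {k G : Type*} [Semiring k]

theorem exists_mem_supported_lt (f : G → ℕ) (x : MonoidAlgebra k G) :
    ∃ L, x ∈ supported k k {g | f g < L} :=
  ⟨x.coeff.support.sup f + 1, fun _ hg => Nat.lt_succ_of_le (Finset.le_sup hg)⟩

theorem of_mem_supported [Monoid G] {g : G} {s : Set G} (hg : g ∈ s) :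
    of k G g ∈ supported k k s := by
  rw [supported_eq_span_single]
  exact Submodule.subset_span ⟨g, hg, rfl⟩

end MonoidAlgebra

open MonoidAlgebra (of supported)

namespace FoxCalculus

/-- The semidirect product `k[F] ⋊ F` for the action of `F = FreeGroup ι` on `k[F]` by left
multiplication; its multiplicative sections over `F` are the Fox derivations `F → k[F]`. -/
@[ext] structure FoxSemidirect (k ι : Type*) [CommRing k] where
  left : MonoidAlgebra k (FreeGroup ι)
  right : FreeGroup ι

namespace FoxSemidirect

variable {k ι : Type*} [CommRing k]

instance : Mul (FoxSemidirect k ι) :=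
  ⟨fun x y => ⟨x.left + of k _ x.right * y.left, x.right * y.right⟩⟩

instance : One (FoxSemidirect k ι) := ⟨⟨0, 1⟩⟩

instance : Inv (FoxSemidirect k ι) :=
  ⟨fun x => ⟨-(of k _ x.right⁻¹ * x.left), x.right⁻¹⟩⟩

@[simp] theorem left_mul (x y : FoxSemidirect k ι) :
    (x * y).left = x.left + of k _ x.right * y.left := rfl

@[simp] theorem right_mul (x y : FoxSemidirect k ι) : (x * y).right = x.right * y.right := rfl

@[simp] theorem left_one : (1 : FoxSemidirect k ι).left = 0 := rfl

@[simp] theorem right_one : (1 : FoxSemidirect k ι).right = 1 := rfl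

@[simp] theorem left_inv (x : FoxSemidirect k ι) :
    x⁻¹.left = -(of k _ x.right⁻¹ * x.left) := rfl

@[simp] theorem right_inv (x : FoxSemidirect k ι) : x⁻¹.right = x.right⁻¹ := rfl

instance : Group (FoxSemidirect k ι) :=
  Group.ofLeftAxioms (fun _ _ _ => by ext <;> simp [mul_add, mul_assoc, add_assoc])
    (fun _ => by ext <;> simp) (fun _ => by ext <;> simp)

def rightHom : FoxSemidirect k ι →* FreeGroup ι where
  toFun := right
  map_one' := rfl
  map_mul' _ _ := rfl

end FoxSemidirect

variable {k ι : Type*} [CommRing k]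

local notation "Λ" => MonoidAlgebra k (FreeGroup ι)

local notation "ε" => MonoidAlgebra.augmentation k (FreeGroup ι)

theorem foxDerivation_ext {f g : FreeGroup ι → Λ}
    (hf : ∀ u v, f (u * v) = f u + of k _ u * f v) (hg : ∀ u v, g (u * v) = g u + of k _ u * g v)
    (h : ∀ i, f (FreeGroup.of i) = g (FreeGroup.of i)) : f = g := by
  let sectionOf (d : FreeGroup ι → Λ) (hd : ∀ u v, d (u * v) = d u + of k _ u * d v) :
      FreeGroup ι →* FoxSemidirect k ι :=
    MonoidHom.mk' (fun w => ⟨d w, w⟩) fun u v => by ext <;> simp [hd]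
  have hsection := FreeGroup.ext_hom (sectionOf f hf) (sectionOf g hg) fun i => by
    ext <;> simp [sectionOf, h]
  exact funext fun w => congrArg FoxSemidirect.left (DFunLike.congr_fun hsection w)

variable [DecidableEq ι]

/-- The `left` component is the Fox derivative `∂_a` with respect to the free basis in which `t_i`
is replaced by the letter `a = t_i^{±1}`: `∂_a(t_j) = [t_j = a] - [t_j = a⁻¹] t_j`. -/
def foxDerivHom (a : ι × Bool) : FreeGroup ι →* FoxSemidirect k ι :=
  FreeGroup.lift fun j => ⟨(if (j, true) = a then 1 else 0) -
    if (j, true) = (a.1, !a.2) then of k _ (FreeGroup.of j) else 0, FreeGroup.of j⟩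

@[simp] theorem foxDerivHom_apply_right (a : ι × Bool) (w : FreeGroup ι) :
    (foxDerivHom (k := k) a w).right = w := by
  have hid : FoxSemidirect.rightHom.comp (foxDerivHom (k := k) a) = MonoidHom.id _ :=
    FreeGroup.ext_hom _ _ fun j => by simp [foxDerivHom, FoxSemidirect.rightHom]
  exact DFunLike.congr_fun hid w

def groupFoxDeriv (a : ι × Bool) (w : FreeGroup ι) : Λ :=
  (foxDerivHom a w).left

theorem groupFoxDeriv_mul (a : ι × Bool) (u v : FreeGroup ι) :
    groupFoxDeriv (k := k) a (u * v) = groupFoxDeriv a u + of k _ u * groupFoxDeriv a v := by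
  simp [groupFoxDeriv]

@[simp] theorem groupFoxDeriv_one (a : ι × Bool) : groupFoxDeriv (k := k) a 1 = 0 := by
  simp [groupFoxDeriv]

theorem groupFoxDeriv_mk_singleton (a y : ι × Bool) :
    groupFoxDeriv (k := k) a (FreeGroup.mk [y]) =
      (if y = a then 1 else 0) - if y = (a.1, !a.2) then of k _ (FreeGroup.mk [y]) else 0 := by
  obtain ⟨i, b⟩ := a
  obtain ⟨j, _ | _⟩ := y
  · by_cases hji : j = i
    · subst hji
      cases b <;>
        simp [groupFoxDeriv, foxDerivHom, FreeGroup.mk_singleton_false, ← MonoidAlgebra.one_def]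
    · simp [groupFoxDeriv, foxDerivHom, FreeGroup.mk_singleton_false, hji]
  · simp [groupFoxDeriv, foxDerivHom, FreeGroup.mk_singleton_true]

theorem groupFoxDeriv_of (a : ι × Bool) (j : ι) :
    groupFoxDeriv (k := k) a (FreeGroup.of j) = (if (j, true) = a then 1 else 0) -
      if (j, true) = (a.1, !a.2) then of k _ (FreeGroup.of j) else 0 :=
  groupFoxDeriv_mk_singleton a (j, true)

theorem groupFoxDeriv_mem_supported (a : ι × Bool) (w : FreeGroup ι) :
    groupFoxDeriv (k := k) a w ∈ supported k k
      {v | v.norm < w.norm ∨ v = w ∧ v.toWord.getLast? = some (a.1, !a.2)} := by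
  suffices h : ∀ L : List (ι × Bool), FreeGroup.IsReduced L →
      groupFoxDeriv (k := k) a (FreeGroup.mk L) ∈ supported k k
        {v | v.norm < L.length ∨ v = FreeGroup.mk L ∧ v.toWord.getLast? = some (a.1, !a.2)} by
    have hw := h w.toWord FreeGroup.isReduced_toWord
    rwa [FreeGroup.mk_toWord] at hw
  intro L hL
  induction L using List.reverseRecOn with
  | nil => simp [← FreeGroup.one_eq_mk]
  | append_singleton L y ih =>
    have hL' : FreeGroup.IsReduced L := hL.infix ⟨[], [y], by simp⟩
    have hnorm : (FreeGroup.mk L).norm = L.length := by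
      simp [FreeGroup.norm, FreeGroup.toWord_mk, hL'.reduce_eq]
    have hlast : (FreeGroup.mk (L ++ [y])).toWord.getLast? = some y := by
      simp [FreeGroup.toWord_mk, hL.reduce_eq]
    rw [← FreeGroup.mul_mk, groupFoxDeriv_mul, groupFoxDeriv_mk_singleton, mul_sub]
    refine add_mem (MonoidAlgebra.supported_mono ?_ (ih hL')) (sub_mem ?_ ?_)
    · rintro v (hv | ⟨rfl, -⟩)
      · exact Or.inl (by simp only [List.length_append]; omega)
      · exact Or.inl (by simp [hnorm])
    · split_ifs
      · rw [mul_one]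
        exact MonoidAlgebra.of_mem_supported (Or.inl (by simp [hnorm]))
      · simp
    · split_ifs with hy
      · rw [← map_mul, FreeGroup.mul_mk]
        exact MonoidAlgebra.of_mem_supported (Or.inr ⟨rfl, hy ▸ hlast⟩)
      · simp

def foxDeriv (a : ι × Bool) : Λ →ₗ[k] Λ :=
  (MonoidAlgebra.basis (FreeGroup ι) k).constr k (groupFoxDeriv a)

@[simp] theorem foxDeriv_of (a : ι × Bool) (w : FreeGroup ι) :
    foxDeriv (k := k) a (of k _ w) = groupFoxDeriv a w :=
  (MonoidAlgebra.basis (FreeGroup ι) k).constr_basis k _ w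

theorem foxDeriv_mul (a : ι × Bool) (x y : Λ) :
    foxDeriv a (x * y) = ε y • foxDeriv a x + x * foxDeriv a y := by
  induction x using MonoidAlgebra.induction_on with
  | of u =>
    induction y using MonoidAlgebra.induction_on with
    | of v =>
      rw [← map_mul, foxDeriv_of, foxDeriv_of, foxDeriv_of, MonoidAlgebra.augmentation_of,
        one_smul, groupFoxDeriv_mul]
    | add y z hy hz => simp only [mul_add, map_add, hy, hz, add_smul]; abel
    | smul r y hy =>
      simp only [mul_smul_comm, map_smul, hy, smul_add, smul_eq_mul, mul_smul, smul_comm r]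
  | add x z hx hz => simp only [add_mul, map_add, hx, hz, smul_add]; abel
  | smul r x hx => simp only [smul_mul_assoc, map_smul, hx, smul_add, smul_comm r]

theorem foxDeriv_mem_supported (a : ι × Bool) {L : ℕ} {S : Set (FreeGroup ι)}
    (hS : ∀ v ∈ S, v.norm ≤ L) {x : Λ} (hx : x ∈ supported k k S) :
    foxDeriv a x ∈ supported k k
      ({v | v.norm < L} ∪ {v ∈ S | v.toWord.getLast? = some (a.1, !a.2)}) := by
  rw [MonoidAlgebra.supported_eq_span_single] at hx
  refine (Submodule.span_le (p := (supported k k _).comap (foxDeriv a)) |>.mpr ?_) hx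
  rintro _ ⟨w, hw, rfl⟩
  refine MonoidAlgebra.supported_mono ?_
    (foxDeriv_of (k := k) a w ▸ groupFoxDeriv_mem_supported a w)
  rintro v (hv | ⟨rfl, hv⟩)
  · exact Or.inl (hv.trans_le (hS w hw))
  · exact Or.inr ⟨hw, hv⟩

variable [Fintype ι]

theorem of_sub_one_eq_sum_groupFoxDeriv (b : Bool) (w : FreeGroup ι) :
    of k _ w - 1 =
      ∑ i, groupFoxDeriv (k := k) (i, b) w * (of k _ (FreeGroup.mk [(i, b)]) - 1) := by
  refine congrFun (foxDerivation_ext (f := fun w => of k _ w - 1)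
    (g := fun w => ∑ i, groupFoxDeriv (i, b) w * (of k _ (FreeGroup.mk [(i, b)]) - 1))
    ?_ ?_ fun j => ?_) w
  · intro u v
    simp only [map_mul, mul_sub, mul_one]
    abel
  · intro u v
    simp only [groupFoxDeriv_mul, add_mul, Finset.sum_add_distrib, Finset.mul_sum, mul_assoc]
  · rw [Fintype.sum_eq_single j fun i hij => by simp [groupFoxDeriv_of, Ne.symm hij]]
    cases b
    · simp [groupFoxDeriv_of, FreeGroup.mk_singleton_false, mul_sub, ← MonoidAlgebra.one_def]
      abel
    · simp [groupFoxDeriv_of, FreeGroup.mk_singleton_true]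

theorem sub_augmentation_smul_one_eq_sum_foxDeriv (b : Bool) (x : Λ) :
    x - ε x • 1 = ∑ i, foxDeriv (i, b) x * (of k _ (FreeGroup.mk [(i, b)]) - 1) := by
  induction x using MonoidAlgebra.induction_on with
  | of w =>
    simp only [foxDeriv_of, MonoidAlgebra.augmentation_of, one_smul]
    exact of_sub_one_eq_sum_groupFoxDeriv b w
  | add x y hx hy =>
    simp only [map_add, add_mul, Finset.sum_add_distrib, add_smul, ← hx, ← hy]
    abel
  | smul r x hx =>
    simp only [map_smul, smul_mul_assoc, ← Finset.smul_sum, ← hx, smul_sub, smul_assoc]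

theorem eq_zero_of_foxDeriv_eq_zero (b : Bool) {x : Λ} (hx : ε x = 0)
    (h : ∀ i, foxDeriv (i, b) x = 0) : x = 0 := by
  simpa [hx, h] using sub_augmentation_smul_one_eq_sum_foxDeriv b x

theorem eq_zero_of_mem_iInf_of_mem_supported_union {L : ℕ}
    (hL : ∀ x ∈ ⨅ m : ℕ, LinearMap.ker (ε).toLinearMap ^ (m + 1),
      x ∈ supported k k {v | v.norm < L} → x = 0)
    (T : Finset (FreeGroup ι)) (hT : ∀ v ∈ T, v.norm ≤ L) {x : Λ}
    (hx : x ∈ ⨅ m : ℕ, LinearMap.ker (ε).toLinearMap ^ (m + 1))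
    (hxT : x ∈ supported k k ({v | v.norm < L} ∪ ↑T)) : x = 0 := by
  induction T using Finset.strongInduction generalizing x with
  | H T ihT =>
  rcases T.eq_empty_or_nonempty with rfl | hne
  · exact hL x hx (by simpa using hxT)
  obtain ⟨b, hb⟩ := Finset.exists_forall_filter_ssubset hne fun w => w.toWord.getLast?
  refine eq_zero_of_foxDeriv_eq_zero b (mem_ker_of_mem_iInf_ker_pow _ hx) fun i => ?_
  refine ihT _ (hb i) (fun v hv => hT v (Finset.mem_filter.mp hv).1)
    (map_mem_iInf_ker_pow _ (foxDeriv_mul _) hx) ?_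
  refine MonoidAlgebra.supported_mono ?_ (foxDeriv_mem_supported (i, b) (L := L) ?_ hxT)
  · rintro v (hv | ⟨hv | hv, hlast⟩)
    · exact Or.inl hv
    · exact Or.inl hv
    · exact Or.inr (Finset.mem_filter.mpr ⟨hv, hlast⟩)
  · rintro v (hv | hv)
    · exact hv.le
    · exact hT v hv

theorem eq_zero_of_mem_iInf_of_mem_supported (L : ℕ) {x : Λ}
    (hx : x ∈ ⨅ m : ℕ, LinearMap.ker (ε).toLinearMap ^ (m + 1))
    (hL : x ∈ supported k k {v | v.norm < L}) : x = 0 := by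
  induction L generalizing x with
  | zero =>
    ext v
    exact MonoidAlgebra.mem_supported'.mp hL v (Nat.not_lt_zero _)
  | succ L ih =>
    exact eq_zero_of_mem_iInf_of_mem_supported_union (fun y hy hyL => ih hy hyL)
      x.coeff.support (fun v hv => Nat.lt_succ_iff.mp (hL hv)) hx fun v hv => Or.inr hv

variable (k ι) in
theorem iInf_ker_augmentation_pow_eq_bot :
    ⨅ m : ℕ, LinearMap.ker (ε).toLinearMap ^ (m + 1) = ⊥ := by
  refine eq_bot_iff.mpr fun x hx => ?_
  obtain ⟨L, hL⟩ := MonoidAlgebra.exists_mem_supported_lt FreeGroup.norm x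
  exact eq_zero_of_mem_iInf_of_mem_supported L hx hL

end FoxCalculus

end

theorem stmt0_general (k : Type*) [CommRing k] (n : ℕ) :
    ⨅ m : ℕ, (LinearMap.ker (freeGroupAug k n).toLinearMap) ^ (m + 1)
      = (⊥ : Submodule k (MonoidAlgebra k (FreeGroup (Fin n)))) :=
  FoxCalculus.iInf_ker_augmentation_pow_eq_bot k (Fin n)

/-- The intersection of all powers of the augmentation ideal of the group algebra
of a free group is trivial; consequently the ideal topology is Hausdorff. -/
theorem stmt0 (k : Type*) [CommRing k] (n : ℕ) (hn : 1 ≤ n) :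
    ⨅ m : ℕ, (LinearMap.ker (freeGroupAug k n).toLinearMap) ^ (m + 1)
      = (⊥ : Submodule k (MonoidAlgebra k (FreeGroup (Fin n)))) :=
  stmt0_general k n
end

section
/- Let k be a commutative ring, n ≥ 1, F the free group on n generators t_1, …, t_n, Λ = MonoidAlgebra k F its group algebra, and ε : Λ → k the augmentation. Then the augmentation ideal ker ε, viewed as a left ideal of Λ (a left Λ-submodule of Λ), is a free left Λ-module of rank n on the elements t_i − 1: there exists a basis b : Basis (Fin n) Λ (ker ε) whose i-th element is t_i − 1 (the image in Λ of the i-th free generator, minus 1). -/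
/-!
Write `Λ = k[F]` and `eᵢ` for the standard basis of `Λ^(ι)`. The Fox derivative `D : Λ → Λ^(ι)`
is the `k`-linear extension of the crossed homomorphism `F → Λ^(ι)` with `D tᵢ = eᵢ`; it exists
because a crossed homomorphism is the same as a section `g ↦ (D g, g)` of `Λ^(ι) ⋊ F → F`, which
freeness lets us define on generators. The Leibniz rule `D (a b) = ε(b) D a + a D b` gives
`D (a (tᵢ - 1)) = a eᵢ`, so `D` is a left inverse of `c ↦ ∑ cᵢ (tᵢ - 1)`, and the fundamental
formula `∑ (D a)ᵢ (tᵢ - 1) = a - ε(a)` shows that this map is onto `ker ε`.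
-/

noncomputable section

open MonoidAlgebra

lemma MonoidAlgebra.basis_constr_of {k G M : Type*} [CommSemiring k] [Monoid G] [AddCommMonoid M]
    [Module k M] (f : G → M) (g : G) : (basis G k).constr k f (of k G g) = f g := by
  rw [of_apply, ← basis_apply, Module.Basis.constr_basis]

section CrossedHom

variable {k G M : Type*} [CommRing k] [Group G] [AddCommGroup M] [Module k[G] M]

variable (k) in
def IsCrossedHom (d : G → M) : Prop :=
  ∀ g h, d (g * h) = d g + of k G g • d h

variable (k G M) in
def MonoidAlgebra.mulAutMultiplicative : G →* MulAut (Multiplicative M) :=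
  (MulAutMultiplicative (G := M)).symm.toMonoidHom.comp <|
    (DistribMulAction.toAddAut k[G]ˣ M).comp (of k G).toHomUnits

@[simp]
lemma MonoidAlgebra.mulAutMultiplicative_apply (g : G) (x : Multiplicative M) :
    mulAutMultiplicative k G M g x = .ofAdd (of k G g • x.toAdd) :=
  rfl

lemma isCrossedHom_of_sub_one : IsCrossedHom k fun g : G ↦ of k G g - 1 := by
  intro g h
  dsimp only
  rw [map_mul, smul_eq_mul, mul_sub, mul_one]
  abel

namespace IsCrossedHom

variable {d : G → M} (hd : IsCrossedHom k d)
include hd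

lemma apply_one : d 1 = 0 := by
  simpa [← one_def] using hd 1 1

lemma linearMap_comp {N : Type*} [AddCommGroup N] [Module k[G] N] (ψ : M →ₗ[k[G]] N) :
    IsCrossedHom k (ψ ∘ d) := by
  intro g h
  simp only [Function.comp_apply, hd g h, map_add, map_smul]

def toSemidirectProduct : G →* Multiplicative M ⋊[mulAutMultiplicative k G M] G where
  toFun g := ⟨.ofAdd (d g), g⟩
  map_one' := SemidirectProduct.ext (by simp [hd.apply_one]) rfl
  map_mul' g h := SemidirectProduct.ext (hd g h) rfl

lemma constr_mul [Module k M] [IsScalarTower k k[G] M] (a b : k[G]) :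
    (basis G k).constr k d (a * b) =
      lift k k G 1 b • (basis G k).constr k d a + a • (basis G k).constr k d b := by
  induction a using MonoidAlgebra.induction_on with
  | of g =>
    induction b using MonoidAlgebra.induction_on with
    | of h =>
      rw [← map_mul, basis_constr_of, basis_constr_of, basis_constr_of, lift_of,
        MonoidHom.one_apply, one_smul, hd g h]
    | add b b' hb hb' => simp only [mul_add, map_add, hb, hb', add_smul, smul_add]; abel
    | smul r b hb =>
      simp only [mul_smul_comm, map_smul, hb, smul_add, smul_eq_mul, mul_smul, smul_comm r]
  | add a a' ha ha' => simp only [add_mul, map_add, ha, ha', add_smul, smul_add]; abel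
  | smul r a ha => simp only [smul_mul_assoc, map_smul, ha, smul_add, smul_comm r, smul_assoc]

end IsCrossedHom

end CrossedHom

namespace FreeGroup

section CrossedHom

variable {k ι M : Type*} [CommRing k] [AddCommGroup M] [Module k[FreeGroup ι] M]

theorem eq_of_isCrossedHom {d d' : FreeGroup ι → M} (hd : IsCrossedHom k d)
    (hd' : IsCrossedHom k d') (h : ∀ i, d (of i) = d' (of i)) : d = d' := by
  have := ext_hom hd.toSemidirectProduct hd'.toSemidirectProduct
    fun i ↦ SemidirectProduct.ext (h i) rfl
  exact funext fun g ↦ congrArg (fun x ↦ x.left.toAdd) (DFunLike.congr_fun this g)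

variable (k) in
def semidirectLift (m : ι → M) :
    FreeGroup ι →* Multiplicative M ⋊[mulAutMultiplicative k _ M] FreeGroup ι :=
  FreeGroup.lift fun i ↦ ⟨.ofAdd (m i), of i⟩

lemma semidirectLift_right (m : ι → M) (g : FreeGroup ι) : (semidirectLift k m g).right = g := by
  have : SemidirectProduct.rightHom.comp (semidirectLift k m) = MonoidHom.id _ :=
    ext_hom _ _ fun i ↦ by simp [semidirectLift]
  exact DFunLike.congr_fun this g

variable (k) in
def crossedHom (m : ι → M) (g : FreeGroup ι) : M :=
  (semidirectLift k m g).left.toAdd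

@[simp]
lemma crossedHom_of (m : ι → M) (i : ι) : crossedHom k m (of i) = m i := by
  simp [crossedHom, semidirectLift]

lemma isCrossedHom_crossedHom (m : ι → M) : IsCrossedHom k (crossedHom k m) := by
  intro g h
  rw [crossedHom, _root_.map_mul, SemidirectProduct.mul_left, semidirectLift_right]
  rfl

end CrossedHom

variable (k ι : Type*) [CommRing k]

local notation "Λ" => k[FreeGroup ι]
local notation "ε" => MonoidAlgebra.lift k k (FreeGroup ι) 1

def foxDeriv : Λ →ₗ[k] ι →₀ Λ :=
  (basis _ k).constr k (crossedHom k fun i ↦ Finsupp.single i 1)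

variable {k ι}

lemma foxDeriv_of (g : FreeGroup ι) :
    foxDeriv k ι (MonoidAlgebra.of k _ g) = crossedHom k (fun i ↦ Finsupp.single i 1) g :=
  basis_constr_of _ g

lemma foxDeriv_mul (a b : Λ) : foxDeriv k ι (a * b) = ε b • foxDeriv k ι a + a • foxDeriv k ι b :=
  (isCrossedHom_crossedHom _).constr_mul a b

lemma foxDeriv_mul_of_sub_one (a : Λ) (i : ι) :
    foxDeriv k ι (a * (MonoidAlgebra.of k _ (of i) - 1)) = Finsupp.single i a := by
  have hone : foxDeriv k ι 1 = 0 := by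
    rw [← (MonoidAlgebra.of k _).map_one, foxDeriv_of, (isCrossedHom_crossedHom _).apply_one]
  rw [foxDeriv_mul, map_sub, map_sub, lift_of, foxDeriv_of, hone]
  simp

variable (k ι) in
lemma linearCombination_crossedHom (g : FreeGroup ι) :
    Finsupp.linearCombination Λ (fun i ↦ MonoidAlgebra.of k _ (of i) - 1)
      (crossedHom k (fun i ↦ Finsupp.single i 1) g) = MonoidAlgebra.of k _ g - 1 := by
  refine congrFun (eq_of_isCrossedHom ((isCrossedHom_crossedHom _).linearMap_comp _)
    isCrossedHom_of_sub_one fun i ↦ ?_) g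
  simp

lemma linearCombination_foxDeriv (a : Λ) :
    Finsupp.linearCombination Λ (fun i ↦ MonoidAlgebra.of k _ (of i) - 1) (foxDeriv k ι a) =
      a - algebraMap k Λ (ε a) := by
  have : (Finsupp.linearCombination Λ (fun i ↦ MonoidAlgebra.of k _ (of i) - 1)).restrictScalars k
      ∘ₗ foxDeriv k ι = LinearMap.id - Algebra.linearMap k Λ ∘ₗ (ε).toLinearMap := by
    refine (basis _ k).ext fun g ↦ ?_
    rw [basis_apply, ← of_apply]
    simp only [LinearMap.comp_apply, LinearMap.restrictScalars_apply, foxDeriv_of,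
      linearCombination_crossedHom, LinearMap.sub_apply, LinearMap.id_apply,
      AlgHom.toLinearMap_apply, Algebra.linearMap_apply, lift_of, MonoidHom.one_apply,
      _root_.map_one]
  exact LinearMap.congr_fun this a

theorem linearIndependent_of_sub_one :
    LinearIndependent Λ fun i ↦ MonoidAlgebra.of k (FreeGroup ι) (of i) - 1 := by
  refine Function.LeftInverse.injective (g := foxDeriv k ι) fun c ↦ ?_
  simp only [Finsupp.linearCombination_apply, map_finsuppSum, smul_eq_mul, foxDeriv_mul_of_sub_one,
    Finsupp.sum_single]

theorem span_of_sub_one :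
    Submodule.span Λ (Set.range fun i ↦ MonoidAlgebra.of k (FreeGroup ι) (of i) - 1) =
      RingHom.ker ε := by
  refine le_antisymm (Submodule.span_le.mpr ?_) fun a ha ↦ ?_
  · rintro _ ⟨i, rfl⟩
    simp
  · rw [← Finsupp.range_linearCombination]
    refine ⟨foxDeriv k ι a, ?_⟩
    rw [linearCombination_foxDeriv, RingHom.mem_ker.mp ha, map_zero, sub_zero]

variable (k ι) in
def augmentationIdealBasis : Module.Basis ι Λ (RingHom.ker ε) :=
  (Module.Basis.span linearIndependent_of_sub_one).map (LinearEquiv.ofEq _ _ span_of_sub_one)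

@[simp]
lemma coe_augmentationIdealBasis (i : ι) :
    (augmentationIdealBasis k ι i : Λ) = MonoidAlgebra.of k _ (of i) - 1 := by
  simp [augmentationIdealBasis]

end FreeGroup

end

theorem stmt1_general (k : Type*) [CommRing k] (n : ℕ) :
    ∃ b : Module.Basis (Fin n) (MonoidAlgebra k (FreeGroup (Fin n)))
        ↥(RingHom.ker (freeGroupAug k n)),
      ∀ i : Fin n, (b i : MonoidAlgebra k (FreeGroup (Fin n)))
        = MonoidAlgebra.of k (FreeGroup (Fin n)) (FreeGroup.of i) - 1 :=
  ⟨FreeGroup.augmentationIdealBasis k (Fin n), FreeGroup.coe_augmentationIdealBasis⟩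

/-- The augmentation ideal of the group algebra of a free group of rank `n`, viewed as a
left ideal, is a free left module of rank `n` on the elements `t i - 1`. -/
theorem stmt1 (k : Type*) [CommRing k] (n : ℕ) (hn : 1 ≤ n) :
    ∃ b : Module.Basis (Fin n) (MonoidAlgebra k (FreeGroup (Fin n)))
        ↥(RingHom.ker (freeGroupAug k n)),
      ∀ i : Fin n, (b i : MonoidAlgebra k (FreeGroup (Fin n)))
        = MonoidAlgebra.of k (FreeGroup (Fin n)) (FreeGroup.of i) - 1 :=
  stmt1_general k n
end

section
/- Let R be a ring and n ≥ 2 a natural number such that R is isomorphic to R^n as left R-modules, i.e., there exists a linear equivalence R ≃ₗ[R] (Fin n → R). Then R is strongly Bezout on the left: every finitely generated left R-module is cyclic (can be generated by a single element). -/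
/-- If `R ≅ Rⁿ` as left `R`-modules for some `n ≥ 2`, then every finitely generated
left `R`-module is cyclic, i.e. `R` is a strongly Bezout ring on the left. -/
theorem stmt3 (R : Type*) [Ring R] (n : ℕ) (hn : 2 ≤ n)
    (e : R ≃ₗ[R] (Fin n → R)) :
    ∀ (M : Type*) [AddCommGroup M] [Module R M], Module.Finite R M →
      ∃ m : M, Submodule.span R {m} = ⊤ := by
  -- indices 0 and 1 in Fin n
  set i0 : Fin n := ⟨0, by omega⟩ with hi0
  set i1 : Fin n := ⟨1, by omega⟩ with hi1
  have hne : i0 ≠ i1 := by simp [hi0, hi1, Fin.ext_iff]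
  -- Step 1: for every k there is a surjective linear map R →ₗ[R] (Fin k → R)
  have key : ∀ k : ℕ, ∃ f : R →ₗ[R] (Fin k → R), Function.Surjective f := by
    intro k
    induction k with
    | zero => exact ⟨0, fun v => ⟨0, funext fun i => i.elim0⟩⟩
    | succ k ih =>
      obtain ⟨f, hf⟩ := ih
      refine ⟨LinearMap.pi (fun i =>
        Fin.cases ((LinearMap.proj i0).comp e.toLinearMap)
          (fun j => (LinearMap.proj j).comp
            (f.comp ((LinearMap.proj i1).comp e.toLinearMap))) i), ?_⟩
      intro v
      obtain ⟨b, hb⟩ := hf (fun j => v j.succ)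
      set w : Fin n → R := Function.update (Function.update (0 : Fin n → R) i0 (v 0)) i1 b
        with hw
      refine ⟨e.symm w, funext fun i => ?_⟩
      have hw0 : w i0 = v 0 := by
        simp [hw, Function.update_of_ne hne]
      have hw1 : w i1 = b := by simp [hw]
      refine Fin.cases ?_ (fun j => ?_) i <;>
        simp [LinearMap.pi_apply, hw0, hw1, hb]
  -- Step 2: any f.g. module is cyclic
  intro M _ _ hM
  obtain ⟨k, π, hπ⟩ := Module.Finite.exists_fin' R M
  obtain ⟨f, hf⟩ := key k
  refine ⟨π (f 1), ?_⟩
  rw [eq_top_iff]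
  rintro x -
  obtain ⟨y, hy⟩ := hπ.comp hf x
  have : x = y • π (f 1) := by
    rw [← hy]
    simp [← map_smul, smul_eq_mul, mul_one]
  rw [this]
  exact Submodule.smul_mem _ _ (Submodule.mem_span_singleton_self _)
end

section
/- Let R be a projective-free ring: every projective left R-module is free. Then every finitely generated left R-module is cyclic (R is strongly Bezout on the left) if and only if there exists a natural number n ≥ 2 and a left R-module isomorphism R ≃ₗ[R] (Fin n → R); i.e., a projective-free algebra has module type (1, n) for some n ≥ 2 if and only if it is strongly Bezout. -/
/-!
If `R ≅ Rⁿ` with `n ≥ 2`, then `R` surjects onto `R × R`, hence onto every `Rᵏ`, hence onto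
every finitely generated module. Conversely, a generator of `R²` gives a surjection `R → R²`,
which splits because `R²` is projective: `R ≅ K × R²` with `K` finitely generated projective,
hence free, so `K ≅ Rᵏ` and `R ≅ R^(k+2)`.
-/

universe u

open Function

section Semiring

variable {R M : Type*} [Semiring R] [AddCommMonoid M] [Module R M]

theorem LinearMap.exists_surjective_pi_fin_of_surjective_prod {q : M →ₗ[R] M × M}
    (hq : Surjective q) : ∀ k : ℕ, ∃ p : M →ₗ[R] (Fin k → M), Surjective p
  | 0 => ⟨0, fun _ => ⟨0, Subsingleton.elim _ _⟩⟩
  | k + 1 => by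
    obtain ⟨p, hp⟩ := exists_surjective_pi_fin_of_surjective_prod hq k
    exact ⟨(Fin.consLinearEquiv R fun _ => M).toLinearMap ∘ₗ (LinearMap.id.prodMap p) ∘ₗ q,
      (Fin.consLinearEquiv R _).surjective.comp ((surjective_id.prodMap hp).comp hq)⟩

theorem LinearMap.exists_surjective_prod_of_linearEquiv_pi_fin {n : ℕ} (hn : 2 ≤ n)
    (e : M ≃ₗ[R] (Fin n → M)) : ∃ q : M →ₗ[R] M × M, Surjective q :=
  ⟨(LinearEquiv.finTwoArrow R M).toLinearMap ∘ₗ LinearMap.funLeft R M (Fin.castLE hn) ∘ₗ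
      e.toLinearMap,
    (LinearEquiv.finTwoArrow R M).surjective.comp
      ((LinearMap.funLeft_surjective_of_injective R M _ (Fin.castLE_injective hn)).comp
        e.surjective)⟩

variable (R M) in
theorem Module.Free.exists_linearEquiv_pi_fin [Module.Finite R M] [Module.Free R M] :
    ∃ k : ℕ, Nonempty (M ≃ₗ[R] (Fin k → R)) :=
  ⟨_, ⟨((Module.Free.chooseBasis R M).reindex (Fintype.equivFin _)).equivFun⟩⟩

variable (R M) in
def Fin.appendLinearEquiv (k m : ℕ) : ((Fin k → M) × (Fin m → M)) ≃ₗ[R] (Fin (k + m) → M) :=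
  (LinearEquiv.sumArrowLequivProdArrow (Fin k) (Fin m) R M).symm ≪≫ₗ
    LinearEquiv.funCongrLeft R M finSumFinEquiv.symm

end Semiring

section Ring

variable {R : Type*} [Ring R]

theorem Submodule.span_singleton_eq_top_of_surjective {M : Type*} [AddCommGroup M] [Module R M]
    {f : R →ₗ[R] M} (hf : Surjective f) : R ∙ f 1 = ⊤ :=
  eq_top_iff.2 fun x _ => by
    obtain ⟨r, rfl⟩ := hf x
    exact Submodule.mem_span_singleton.2 ⟨r, by rw [← map_smul, smul_eq_mul, mul_one]⟩

theorem LinearMap.exists_linearEquiv_ker_prod_of_surjective {M P : Type*} [AddCommGroup M]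
    [Module R M] [AddCommGroup P] [Module R P] [Module.Projective R P] {f : M →ₗ[R] P}
    (hf : Surjective f) : Nonempty ((ker f × P) ≃ₗ[R] M) := by
  obtain ⟨s, hs⟩ := Module.projective_lifting_property f LinearMap.id hf
  exact ⟨lequivProdOfRightSplitExact (ker f).injective_subtype (Submodule.range_subtype _) hs⟩

theorem Module.Projective.of_linearEquiv_prod {M N P : Type*} [AddCommGroup M] [Module R M]
    [AddCommGroup N] [Module R N] [AddCommGroup P] [Module R P] [Module.Projective R M]
    (e : (N × P) ≃ₗ[R] M) : Module.Projective R N :=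
  .of_split (e.toLinearMap ∘ₗ LinearMap.inl R N P) (LinearMap.fst R N P ∘ₗ e.symm.toLinearMap)
    (by ext; simp)

end Ring

/-- A projective-free ring (every projective left module is free) is strongly Bezout
(every finitely generated left module is cyclic) if and only if it has module type `(1, n)`
for some `n ≥ 2`, i.e. `R ≅ Rⁿ` as left `R`-modules for some `n ≥ 2`. -/
theorem stmt4 (R : Type u) [Ring R]
    (hpf : ∀ (M : Type u) [AddCommGroup M] [Module R M],
      Module.Projective R M → Module.Free R M) :
    (∀ (M : Type u) [AddCommGroup M] [Module R M], Module.Finite R M →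
      ∃ m : M, Submodule.span R {m} = ⊤) ↔
    ∃ n : ℕ, 2 ≤ n ∧ Nonempty (R ≃ₗ[R] (Fin n → R)) := by
  constructor
  · intro hcyc
    obtain ⟨m, hm⟩ := hcyc (Fin 2 → R) inferInstance
    set f := LinearMap.toSpanSingleton R (Fin 2 → R) m
    have hf : Surjective f := by
      rwa [← LinearMap.range_eq_top, ← LinearMap.span_singleton_eq_range]
    obtain ⟨e⟩ := LinearMap.exists_linearEquiv_ker_prod_of_surjective hf
    have : Module.Finite R (LinearMap.ker f) :=
      .of_surjective (LinearMap.fst R _ _ ∘ₗ e.symm.toLinearMap)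
        ((LinearMap.fst_surjective (R := R)).comp e.symm.surjective)
    have : Module.Free R (LinearMap.ker f) := hpf _ (.of_linearEquiv_prod (R := R) (M := R) e)
    obtain ⟨k, ⟨b⟩⟩ := Module.Free.exists_linearEquiv_pi_fin R (LinearMap.ker f)
    exact ⟨k + 2, by omega,
      ⟨e.symm ≪≫ₗ b.prodCongr (.refl R _) ≪≫ₗ Fin.appendLinearEquiv R R k 2⟩⟩
  · rintro ⟨n, hn, ⟨e⟩⟩ M _ _ _
    obtain ⟨k, g, hg⟩ := Module.Finite.exists_fin' R M
    obtain ⟨q, hq⟩ := LinearMap.exists_surjective_prod_of_linearEquiv_pi_fin hn e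
    obtain ⟨p, hp⟩ := LinearMap.exists_surjective_pi_fin_of_surjective_prod hq k
    exact ⟨_, Submodule.span_singleton_eq_top_of_surjective (f := g ∘ₗ p) (hg.comp hp)⟩
end

section
/- Let k be a commutative ring, n ≥ 1, F the free group on generators t_1, …, t_n, Λ = MonoidAlgebra k F, and ε : Λ → k the augmentation. Let γ ∈ Λ be comonic, i.e., ε(γ) = 1, let Λγ = Submodule.span Λ {γ} be the left ideal generated by γ, and let M = Λ ⧸ Λγ. Then M is a Sato module: the map (Fin n → M) → M sending (m_1, …, m_n) to Σ_{i=1}^n (t_i − 1) • m_i is bijective. -/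
section QuotientSpanSingleton

variable {k R ι : Type*} [CommRing k] [Ring R] [Algebra k R] [Fintype ι]

open Submodule in
theorem bijective_sum_smul_quotient_span_singleton (ε : R →ₐ[k] k) (e : ι → R)
    (he : ∀ i, ε (e i) = 0) (hinj : Function.Injective fun y : ι → R => ∑ i, e i * y i)
    (hker : ∀ x, ε x = 0 → ∃ y : ι → R, ∑ i, e i * y i = x) (γ : R) (hγ : ε γ = 1) :
    Function.Bijective fun m : ι → R ⧸ span R {γ} => ∑ i, e i • m i := by
  set I := span R {γ}
  have mkQ_sum (y : ι → R) : I.mkQ (∑ i, e i * y i) = ∑ i, e i • I.mkQ (y i) := by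
    simp only [map_sum, ← smul_eq_mul, map_smul]
  have ε_sum (y : ι → R) : ε (∑ i, e i * y i) = 0 := by simp [he]
  have mul_γ_mem (a : R) : a * γ ∈ I := I.smul_mem a (mem_span_singleton_self γ)
  refine ⟨?_, fun m => ?_⟩
  · suffices ∀ m : ι → R ⧸ I, ∑ i, e i • m i = 0 → m = 0 by
      intro m m' h
      rw [← sub_eq_zero]
      exact this _ (by simpa [smul_sub] using sub_eq_zero.mpr h)
    intro m hm
    choose l hl using fun i => I.mkQ_surjective (m i)
    obtain rfl : m = fun i => I.mkQ (l i) := funext fun i => (hl i).symm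
    obtain ⟨μ, hμ⟩ := mem_span_singleton.mp <| (Quotient.mk_eq_zero I).mp ((mkQ_sum l).trans hm)
    obtain ⟨y, rfl⟩ := hker μ (by simpa [hγ, ← hμ] using ε_sum l)
    have hl : l = fun i => y i * γ := hinj <| by simpa [Finset.sum_mul, mul_assoc] using hμ.symm
    funext i
    simpa [hl] using mul_γ_mem (y i)
  · obtain ⟨x, rfl⟩ := I.mkQ_surjective m
    obtain ⟨y, hy⟩ := hker (x - ε x • γ) (by simp [hγ])
    refine ⟨fun i => I.mkQ (y i), (mkQ_sum y).symm.trans ?_⟩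
    rw [hy, mkQ_apply, mkQ_apply, Submodule.Quotient.eq, sub_sub_cancel_left,
      ← algebraMap_smul R, smul_eq_mul]
    exact neg_mem (mul_γ_mem _)

end QuotientSpanSingleton

/-- Pairs `(a, d)` with `(a, d) * (a', d') = (a a', d a' + d')`. Under `foxHom`, `g ↦ (g, ∂g)`,
and this law becomes the cocycle rule `∂(gh) = ∂g · h + ∂h` of the Fox derivative. -/
@[ext] structure FoxPair (R M : Type*) where
  fst : R
  snd : M

namespace FoxPair

open MulOpposite

variable {R M N : Type*}

instance [One R] [Zero M] : One (FoxPair R M) := ⟨⟨1, 0⟩⟩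

@[simp] lemma fst_one [One R] [Zero M] : (1 : FoxPair R M).fst = 1 := rfl
@[simp] lemma snd_one [One R] [Zero M] : (1 : FoxPair R M).snd = 0 := rfl

section Monoid

variable [Monoid R] [AddMonoid M] [DistribMulAction Rᵐᵒᵖ M]

instance : Mul (FoxPair R M) := ⟨fun p q => ⟨p.fst * q.fst, op q.fst • p.snd + q.snd⟩⟩

@[simp] lemma fst_mul (p q : FoxPair R M) : (p * q).fst = p.fst * q.fst := rfl
@[simp] lemma snd_mul (p q : FoxPair R M) : (p * q).snd = op q.fst • p.snd + q.snd := rfl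

instance : Monoid (FoxPair R M) where
  mul_assoc p q r := by ext <;> simp [mul_assoc, smul_add, mul_smul, add_assoc]
  one_mul p := by ext <;> simp
  mul_one p := by ext <;> simp

@[simps]
def fstHom : FoxPair R M →* R where
  toFun := fst
  map_one' := rfl
  map_mul' _ _ := rfl

@[simps]
def map [AddMonoid N] [DistribMulAction Rᵐᵒᵖ N] (f : M →+[Rᵐᵒᵖ] N) :
    FoxPair R M →* FoxPair R N where
  toFun p := ⟨p.fst, f p.snd⟩
  map_one' := by ext <;> simp
  map_mul' p q := by ext <;> simp

end Monoid

def unit [Monoid R] [AddGroup M] [DistribMulAction Rᵐᵒᵖ M] (u : Rˣ) (d : M) :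
    (FoxPair R M)ˣ where
  val := ⟨u, d⟩
  inv := ⟨↑u⁻¹, -(op (↑u⁻¹ : R) • d)⟩
  val_inv := by ext <;> simp
  inv_val := by ext <;> simp [← mul_smul, ← op_mul]

@[simps]
def subOneHom [Ring R] : R →* FoxPair R R where
  toFun r := ⟨r, r - 1⟩
  map_one' := by ext <;> simp
  map_mul' r s := by ext <;> simp [sub_mul]

end FoxPair

@[simps]
def sumMulHom {R ι : Type*} [Ring R] [Fintype ι] (e : ι → R) : (ι → R) →+[Rᵐᵒᵖ] R where
  toFun y := ∑ i, e i * y i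
  map_smul' a y := by simp [Finset.sum_mul, mul_assoc]
  map_zero' := by simp
  map_add' y z := by simp [mul_add, Finset.sum_add_distrib]

section FoxCalculus

variable (k : Type*) [CommRing k] {ι : Type*} [DecidableEq ι]

local notation "Λ" => MonoidAlgebra k (FreeGroup ι)

noncomputable def foxHom : FreeGroup ι →* (FoxPair Λ (ι → Λ))ˣ :=
  FreeGroup.lift fun i =>
    FoxPair.unit ((MonoidAlgebra.of k (FreeGroup ι)).toHomUnits (.of i)) (Pi.single i 1)

noncomputable def groupFoxDeriv (g : FreeGroup ι) : ι → Λ := (foxHom k g : FoxPair Λ (ι → Λ)).snd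

lemma fst_foxHom (g : FreeGroup ι) :
    (foxHom k g : FoxPair Λ (ι → Λ)).fst = MonoidAlgebra.of k (FreeGroup ι) g := by
  have h : FoxPair.fstHom.comp ((Units.coeHom _).comp (foxHom k)) =
      MonoidAlgebra.of k (FreeGroup ι) :=
    FreeGroup.ext_hom _ _ fun i => by simp [foxHom, FoxPair.unit]
  exact DFunLike.congr_fun h g

lemma groupFoxDeriv_mul (g h : FreeGroup ι) (j : ι) :
    groupFoxDeriv k (g * h) j =
      groupFoxDeriv k g j * MonoidAlgebra.of k (FreeGroup ι) h + groupFoxDeriv k h j := by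
  simp [groupFoxDeriv, fst_foxHom]

lemma groupFoxDeriv_of (i : ι) : groupFoxDeriv k (FreeGroup.of i) = Pi.single i 1 := by
  simp [groupFoxDeriv, foxHom, FoxPair.unit]

noncomputable def genSubOne (i : ι) : Λ := MonoidAlgebra.of k (FreeGroup ι) (.of i) - 1

lemma sum_genSubOne_mul_groupFoxDeriv [Fintype ι] (g : FreeGroup ι) :
    ∑ i, genSubOne k i * groupFoxDeriv k g i = MonoidAlgebra.of k (FreeGroup ι) g - 1 := by
  -- Both sides send `g` to `(g, ∑ (t_i - 1) ∂_i g)`, resp. `(g, g - 1)`; they agree on generators.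
  have h : (FoxPair.map (sumMulHom (genSubOne k))).comp ((Units.coeHom _).comp (foxHom k)) =
      FoxPair.subOneHom.comp (MonoidAlgebra.of k (FreeGroup ι)) := by
    refine FreeGroup.ext_hom _ _ fun i => ?_
    ext1 <;> simp [foxHom, FoxPair.unit, genSubOne, Pi.single_apply]
  exact congrArg FoxPair.snd (DFunLike.congr_fun h g)

noncomputable def foxDeriv (j : ι) : Λ →ₗ[k] Λ :=
  (MonoidAlgebra.basis (FreeGroup ι) k).constr k fun g => groupFoxDeriv k g j

lemma foxDeriv_of (j : ι) (g : FreeGroup ι) :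
    foxDeriv k j (MonoidAlgebra.of k (FreeGroup ι) g) = groupFoxDeriv k g j := by
  simp [foxDeriv, ← MonoidAlgebra.basis_apply]

lemma foxDeriv_of_mul (j : ι) (h : FreeGroup ι) (x : Λ) :
    foxDeriv k j (MonoidAlgebra.of k (FreeGroup ι) h * x) =
      groupFoxDeriv k h j * x + foxDeriv k j x := by
  induction x using MonoidAlgebra.induction_on with
  | of g => rw [← map_mul, foxDeriv_of, foxDeriv_of, groupFoxDeriv_mul]
  | add x y hx hy => rw [mul_add, map_add, map_add, hx, hy, mul_add, add_add_add_comm]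
  | smul c x hx => rw [mul_smul_comm, map_smul, map_smul, hx, smul_add, mul_smul_comm]

lemma foxDeriv_genSubOne_mul (i j : ι) (x : Λ) :
    foxDeriv k j (genSubOne k i * x) = (Pi.single i x : ι → Λ) j := by
  rw [genSubOne, sub_mul, one_mul, map_sub, foxDeriv_of_mul, add_sub_cancel_right,
    groupFoxDeriv_of]
  simp [Pi.single_apply]

variable [Fintype ι]

lemma foxDeriv_sum_genSubOne_mul (j : ι) (y : ι → Λ) :
    foxDeriv k j (∑ i, genSubOne k i * y i) = y j := by
  simp [foxDeriv_genSubOne_mul]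

lemma injective_sum_genSubOne_mul : Function.Injective fun y : ι → Λ => ∑ i, genSubOne k i * y i :=
  fun y y' h => funext fun j => by
    simpa only [foxDeriv_sum_genSubOne_mul] using congrArg (foxDeriv k j) h

lemma sum_genSubOne_mul_foxDeriv (x : Λ) :
    ∑ i, genSubOne k i * foxDeriv k i x =
      x - MonoidAlgebra.lift k k (FreeGroup ι) 1 x • 1 := by
  induction x using MonoidAlgebra.induction_on with
  | of g =>
    simp only [foxDeriv_of, sum_genSubOne_mul_groupFoxDeriv, MonoidAlgebra.lift_of,
      MonoidHom.one_apply, one_smul]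
  | add x y hx hy =>
    simp only [map_add, mul_add, Finset.sum_add_distrib, hx, hy, add_smul, add_sub_add_comm]
  | smul c x hx =>
    simp only [map_smul, mul_smul_comm, ← Finset.smul_sum, hx, smul_sub, smul_eq_mul, mul_smul]

lemma exists_sum_genSubOne_mul_eq {x : Λ} (hx : MonoidAlgebra.lift k k (FreeGroup ι) 1 x = 0) :
    ∃ y : ι → Λ, ∑ i, genSubOne k i * y i = x :=
  ⟨fun i => foxDeriv k i x, by rw [sum_genSubOne_mul_foxDeriv, hx, zero_smul, sub_zero]⟩

end FoxCalculus

theorem stmt6_general (k : Type*) [CommRing k] (n : ℕ)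
    (γ : MonoidAlgebra k (FreeGroup (Fin n))) (hγ : freeGroupAug k n γ = 1) :
    Function.Bijective
      (fun m : Fin n → (MonoidAlgebra k (FreeGroup (Fin n)) ⧸
          Submodule.span (MonoidAlgebra k (FreeGroup (Fin n))) {γ}) =>
        ∑ i : Fin n,
          ((MonoidAlgebra.of k (FreeGroup (Fin n)) (FreeGroup.of i)
            : MonoidAlgebra k (FreeGroup (Fin n))) - 1) • m i) :=
  bijective_sum_smul_quotient_span_singleton (freeGroupAug k n) (genSubOne k)
    (fun i => by simp [freeGroupAug, genSubOne]) (injective_sum_genSubOne_mul k)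
    (fun _ hx => exists_sum_genSubOne_mul_eq k hx) γ hγ

/-- For a comonic polynomial `γ` of the group algebra `Λ` of a free group, the cokernel
`Λ ⧸ Λγ` is a (weak) Sato module: the map `(m_1, …, m_n) ↦ ∑ i (t i - 1) • m i` is
bijective. -/
theorem stmt6 (k : Type*) [CommRing k] (n : ℕ) (hn : 1 ≤ n)
    (γ : MonoidAlgebra k (FreeGroup (Fin n))) (hγ : freeGroupAug k n γ = 1) :
    Function.Bijective
      (fun m : Fin n → (MonoidAlgebra k (FreeGroup (Fin n)) ⧸
          Submodule.span (MonoidAlgebra k (FreeGroup (Fin n))) {γ}) =>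
        ∑ i : Fin n,
          ((MonoidAlgebra.of k (FreeGroup (Fin n)) (FreeGroup.of i)
            : MonoidAlgebra k (FreeGroup (Fin n))) - 1) • m i) :=
  stmt6_general k n γ hγ
end

section
/- Let k be a field, n ≥ 2, F the free group on generators t_1, …, t_n, Λ = MonoidAlgebra k F, ε : Λ → k the augmentation, ℓ the length function, and D_i, D̄_i the canonical Fox derivatives. Let γ ∈ Λ be comonic (ε(γ) = 1), let Λγ = Submodule.span Λ {γ}, and define the operators S_i, S̄_i : Λ → Λ by S_i(λ) = D_i(λ − ε(λ)·γ) and S̄_i(λ) = D̄_i(λ − ε(λ)·γ). Then for every λ ∈ Λ with λ ∉ Λγ, there exists a nonempty finite composition f of operators from {S_1, …, S_n, S̄_1, …, S̄_n} such that f(λ) ∉ Λγ and ℓ(f(λ)) ≤ ℓ(γ). -/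
/-- The length of a free polynomial: the maximal reduced-word length over its support
(with `0` for the zero polynomial). -/
noncomputable def flen {k : Type*} [CommRing k] {n : ℕ}
    (γ : MonoidAlgebra k (FreeGroup (Fin n))) : ℕ :=
  γ.coeff.support.sup fun w => (FreeGroup.toWord w).length

/-!
Writing the cocycle rule `d (g * h) = d g * h + d h` as a homomorphism `FreeGroup → G ⋉ k[G]`
produces the Fox derivatives. By the fundamental formula they are the given `D_i`, `D̄_i`, and
since `λ - ε(λ)γ` lies in the augmentation ideal, `λ ∉ Λγ` forces `S_i λ ∉ Λγ` for some `i` and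
`S̄_j λ ∉ Λγ` for some `j`.

If `m = ℓ(λ) > ℓ(γ)`, then on words of length `m` the operator `S_i` (resp. `S̄_i`) acts as minus
the projection onto the words beginning with `t_i⁻¹` (resp. `t_i`). A top word cannot begin with
both `t_i⁻¹` and `t_j`, so one of `S_i`, `S̄_j` either lowers the length or kills a top word.
Descending lexicographically in (length, number of top words) reaches `ℓ ≤ ℓ(γ)`, and one more
step keeps it there while making the composition nonempty.
-/

noncomputable section

namespace Fox

open MonoidAlgebra

/-- A map `d : G → k[G]` satisfies `d (g * h) = d g * h + d h` exactly when `g ↦ ⟨g, d g⟩` is a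
homomorphism into this group. -/
@[ext] structure Semidirect (k G : Type*) [Ring k] [Group G] where
  fst : G
  snd : k[G]

namespace Semidirect

variable {k G : Type*} [Ring k] [Group G]

instance : Mul (Semidirect k G) :=
  ⟨fun x y => ⟨x.fst * y.fst, x.snd * of k G y.fst + y.snd⟩⟩
instance : One (Semidirect k G) := ⟨⟨1, 0⟩⟩
instance : Inv (Semidirect k G) := ⟨fun x => ⟨x.fst⁻¹, -x.snd * of k G x.fst⁻¹⟩⟩

@[simp] lemma mul_fst (x y : Semidirect k G) : (x * y).fst = x.fst * y.fst := rfl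
@[simp] lemma mul_snd (x y : Semidirect k G) : (x * y).snd = x.snd * of k G y.fst + y.snd := rfl
@[simp] lemma one_fst : (1 : Semidirect k G).fst = 1 := rfl
@[simp] lemma one_snd : (1 : Semidirect k G).snd = 0 := rfl
@[simp] lemma inv_fst (x : Semidirect k G) : x⁻¹.fst = x.fst⁻¹ := rfl
@[simp] lemma inv_snd (x : Semidirect k G) : x⁻¹.snd = -x.snd * of k G x.fst⁻¹ := rfl

instance : Group (Semidirect k G) where
  mul_assoc x y z := by ext <;> simp [mul_assoc, add_mul, add_assoc]
  one_mul x := by ext <;> simp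
  mul_one x := by ext <;> simp
  inv_mul_cancel x := by ext <;> simp [mul_assoc]

def fstHom : Semidirect k G →* G where
  toFun := fst
  map_one' := rfl
  map_mul' _ _ := rfl

end Semidirect

variable {k α : Type*}

@[simp] lemma mk_singleton_true (i : α) : FreeGroup.mk [(i, true)] = FreeGroup.of i := rfl

@[simp] lemma mk_singleton_false (i : α) : FreeGroup.mk [(i, false)] = (FreeGroup.of i)⁻¹ := by
  rw [← mk_singleton_true, FreeGroup.inv_mk]
  rfl

lemma mk_cons (x : α × Bool) (L : List (α × Bool)) :
    FreeGroup.mk (x :: L) = FreeGroup.mk [x] * FreeGroup.mk L := by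
  rw [FreeGroup.mul_mk]
  rfl

lemma toWord_mk_singleton [DecidableEq α] (x : α × Bool) : (FreeGroup.mk [x]).toWord = [x] := by
  rw [FreeGroup.toWord_mk, FreeGroup.reduce_singleton]

section Cocycle

variable [Ring k]

def cocycleHom (v : α → k[FreeGroup α]) :
    FreeGroup α →* Semidirect k (FreeGroup α) :=
  FreeGroup.lift fun j => ⟨FreeGroup.of j, v j⟩

def cocycle (v : α → k[FreeGroup α]) (w : FreeGroup α) : k[FreeGroup α] :=
  (cocycleHom v w).snd

variable (v : α → k[FreeGroup α])

@[simp] lemma cocycleHom_fst (w : FreeGroup α) : (cocycleHom v w).fst = w :=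
  DFunLike.congr_fun (FreeGroup.ext_hom (Semidirect.fstHom.comp (cocycleHom v)) (MonoidHom.id _)
    fun _ => by simp [Semidirect.fstHom, cocycleHom]) w

@[simp] lemma cocycle_one : cocycle v 1 = 0 := by simp [cocycle]

@[simp] lemma cocycle_of (j : α) : cocycle v (FreeGroup.of j) = v j := by
  simp [cocycle, cocycleHom]

lemma cocycle_mul (g h : FreeGroup α) :
    cocycle v (g * h) = cocycle v g * of k _ h + cocycle v h := by
  simp [cocycle]

lemma cocycle_inv (g : FreeGroup α) : cocycle v g⁻¹ = -cocycle v g * of k _ g⁻¹ := by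
  simp [cocycle]

variable [DecidableEq α]

def foxCocycle (b : Bool) (i : α) : FreeGroup α → k[FreeGroup α] :=
  cocycle fun j => if j = i then (if b then 1 else -of k _ (FreeGroup.of j)) else 0

lemma foxCocycle_mul (b : Bool) (i : α) (g h : FreeGroup α) :
    foxCocycle b i (g * h) = foxCocycle (k := k) b i g * of k _ h + foxCocycle b i h :=
  cocycle_mul _ g h

lemma foxCocycle_mk_singleton (b : Bool) (i j : α) (s : Bool) :
    foxCocycle b i (FreeGroup.mk [(j, s)]) =
      if j = i then (if s = b then 1 else -of k _ (FreeGroup.mk [(j, s)])) else 0 := by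
  by_cases hji : j = i
  · subst hji
    cases s <;> cases b <;> simp [foxCocycle, cocycle_inv, ← one_def]
  · cases s <;> simp [foxCocycle, cocycle_inv, hji]

lemma of_mk_singleton_sub_one_eq_sum [Fintype α] (b : Bool) (x : α × Bool) :
    of k _ (FreeGroup.mk [x]) - 1 =
      ∑ i, (of k _ (FreeGroup.mk [(i, b)]) - 1) * foxCocycle b i (FreeGroup.mk [x]) := by
  obtain ⟨j, s⟩ := x
  simp only [foxCocycle_mk_singleton, mul_ite, mul_zero, Finset.sum_ite_eq, Finset.mem_univ,
    if_true]
  split_ifs with hsb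
  · rw [hsb, mul_one]
  · rw [Bool.eq_not.2 (Ne.symm hsb), mul_neg, sub_mul, ← map_mul]
    cases s <;> simp [← one_def]

lemma of_sub_one_eq_sum_foxCocycle [Fintype α] (b : Bool) (w : FreeGroup α) :
    of k _ w - 1 = ∑ i, (of k _ (FreeGroup.mk [(i, b)]) - 1) * foxCocycle b i w := by
  rw [← FreeGroup.mk_toWord (x := w)]
  induction w.toWord with
  | nil => simp [← FreeGroup.one_eq_mk, foxCocycle, ← one_def]
  | cons x L ih =>
    simp only [mk_cons x L, foxCocycle_mul, map_mul, mul_add, Finset.sum_add_distrib,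
      ← mul_assoc, ← Finset.sum_mul, ← ih, ← of_mk_singleton_sub_one_eq_sum]
    noncomm_ring

end Cocycle

section Deriv

variable [CommRing k] [DecidableEq α]

variable (k) in
/-- The Fox derivative with respect to the letter `mk [(i, b)]`: `foxDeriv k true i` is `D_i`
and `foxDeriv k false i` is `D̄_i`. -/
def foxDeriv (b : Bool) (i : α) : k[FreeGroup α] →ₗ[k] k[FreeGroup α] :=
  (basis (FreeGroup α) k).constr k (foxCocycle b i)

@[simp] lemma foxDeriv_of (b : Bool) (i : α) (w : FreeGroup α) :
    foxDeriv k b i (of k _ w) = foxCocycle b i w :=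
  (basis (FreeGroup α) k).constr_basis k _ w

@[simp] lemma foxDeriv_one (b : Bool) (i : α) : foxDeriv k b i 1 = 0 := by
  rw [← map_one (of k (FreeGroup α)), foxDeriv_of, foxCocycle, cocycle_one]

lemma foxDeriv_of_mul (b : Bool) (i : α) (g : FreeGroup α) (μ : k[FreeGroup α]) :
    foxDeriv k b i (of k _ g * μ) = foxCocycle b i g * μ + foxDeriv k b i μ := by
  induction μ using MonoidAlgebra.induction_on with
  | of w => rw [← map_mul, foxDeriv_of, foxDeriv_of, foxCocycle_mul]
  | add μ ν hμ hν => rw [mul_add, map_add, hμ, hν, map_add, mul_add]; abel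
  | smul r μ hμ => rw [mul_smul_comm, map_smul, hμ, map_smul, smul_add, mul_smul_comm]

lemma foxDeriv_of_mk_singleton_sub_one_mul (b : Bool) (i j : α) (μ : k[FreeGroup α]) :
    foxDeriv k b i ((of k _ (FreeGroup.mk [(j, b)]) - 1) * μ) = if j = i then μ else 0 := by
  rw [sub_mul, one_mul, map_sub, foxDeriv_of_mul, foxCocycle_mk_singleton, if_pos rfl,
    add_sub_cancel_right]
  split_ifs <;> simp

end Deriv

section FinRank

variable [CommRing k] {n : ℕ}

local notation "Λ" => k[FreeGroup (Fin n)]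

lemma freeGroupAug_of (w : FreeGroup (Fin n)) : freeGroupAug k n (of k _ w) = 1 := by
  simp [freeGroupAug]

theorem eq_freeGroupAug_smul_one_add_sum_foxDeriv (b : Bool) (μ : Λ) :
    μ = freeGroupAug k n μ • 1 +
      ∑ i, (of k _ (FreeGroup.mk [(i, b)]) - 1) * foxDeriv k b i μ := by
  induction μ using MonoidAlgebra.induction_on with
  | of w =>
    rw [freeGroupAug_of, one_smul]
    simp only [foxDeriv_of, ← of_sub_one_eq_sum_foxCocycle, add_sub_cancel]
  | add μ ν hμ hν =>
    simp only [map_add, add_smul, mul_add, Finset.sum_add_distrib]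
    conv_lhs => rw [hμ, hν]
    abel
  | smul r μ hμ =>
    simp only [map_smul, mul_smul_comm, ← Finset.smul_sum, smul_eq_mul, mul_smul, ← smul_add]
    rw [← hμ]

theorem foxDeriv_unique (b : Bool) (D : Fin n → Λ → Λ)
    (hD : ∀ μ, μ = freeGroupAug k n μ • 1 +
      ∑ i, (of k _ (FreeGroup.mk [(i, b)]) - 1) * D i μ)
    (i : Fin n) : D i = foxDeriv k b i := by
  funext μ
  have h := congrArg (foxDeriv k b i) (hD μ)
  rw [map_add, map_smul, foxDeriv_one, smul_zero, zero_add, map_sum] at h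
  simpa only [foxDeriv_of_mk_singleton_sub_one_mul, Finset.sum_ite_eq', Finset.mem_univ,
    if_true] using h.symm

lemma exists_foxDeriv_notMem (b : Bool) (I : Submodule Λ Λ)
    {ν : Λ} (hν : ν ∉ I) (hε : freeGroupAug k n ν = 0) :
    ∃ i, foxDeriv k b i ν ∉ I := by
  by_contra! h
  rw [eq_freeGroupAug_smul_one_add_sum_foxDeriv b ν, hε, zero_smul, zero_add] at hν
  exact hν (I.sum_mem fun i _ => I.smul_mem _ (h i))


lemma norm_le_flen {μ : Λ} {w : FreeGroup (Fin n)} (hw : w ∈ μ.coeff.support) :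
    w.norm ≤ flen μ :=
  Finset.le_sup (f := fun w => w.toWord.length) hw

lemma coeff_eq_zero_of_flen_lt {μ : Λ} {w : FreeGroup (Fin n)}
    (hw : flen μ < w.norm) : μ.coeff w = 0 :=
  Finsupp.notMem_support_iff.1 fun hmem => (norm_le_flen hmem).not_gt hw

lemma flen_le_iff {μ : Λ} {m : ℕ} :
    flen μ ≤ m ↔ ∀ w ∈ μ.coeff.support, w.norm ≤ m :=
  Finset.sup_le_iff

@[simp] lemma flen_zero : flen (0 : Λ) = 0 := by simp [flen]

lemma flen_add_le (μ ν : Λ) : flen (μ + ν) ≤ max (flen μ) (flen ν) :=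
  flen_le_iff.2 fun _ hw => (Finset.mem_union.1 (Finsupp.support_add hw)).elim
    (fun h => le_max_of_le_left (norm_le_flen h)) (fun h => le_max_of_le_right (norm_le_flen h))

@[simp] lemma flen_neg (μ : Λ) : flen (-μ) = flen μ := by
  simp [flen]

lemma flen_smul_le (c : k) (μ : Λ) : flen (c • μ) ≤ flen μ :=
  Finset.sup_mono Finsupp.support_smul

lemma flen_of_le (w : FreeGroup (Fin n)) : flen (of k _ w) ≤ w.norm :=
  flen_le_iff.2 fun _ hu => by rw [Finset.mem_singleton.1 (Finsupp.support_single_subset hu)]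

@[simp] lemma flen_one : flen (1 : Λ) = 0 := by
  rw [← nonpos_iff_eq_zero, ← map_one (of k _)]
  exact flen_of_le 1

lemma flen_mul_le (μ ν : Λ) : flen (μ * ν) ≤ flen μ + flen ν := by
  classical
  refine flen_le_iff.2 fun w hw => ?_
  obtain ⟨u, hu, v, hv, rfl⟩ := Finset.mem_mul.1 (support_coeff_mul_subset μ ν hw)
  exact (FreeGroup.norm_mul_le u v).trans (add_le_add (norm_le_flen hu) (norm_le_flen hv))

lemma flen_sum_le {ι : Type*} (s : Finset ι) (f : ι → Λ) :
    flen (∑ a ∈ s, f a) ≤ s.sup fun a => flen (f a) := by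
  induction s using Finset.cons_induction with
  | empty => simp
  | cons a s ha ih =>
    rw [Finset.sum_cons, Finset.sup_cons]
    exact (flen_add_le _ _).trans (max_le_max le_rfl ih)

lemma flen_constr_le (f : FreeGroup (Fin n) → Λ) (ν : Λ) :
    flen ((basis _ k).constr k f ν) ≤ ν.coeff.support.sup fun w => flen (f w) := by
  rw [Module.Basis.constr_apply]
  exact (flen_sum_le _ _).trans (Finset.sup_mono_fun fun w _ => flen_smul_le _ _)

lemma flen_foxCocycle_mk_singleton_le (b : Bool) (i : Fin n) (x : Fin n × Bool) :
    flen (foxCocycle (k := k) b i (FreeGroup.mk [x])) ≤ 1 := by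
  obtain ⟨j, s⟩ := x
  rw [foxCocycle_mk_singleton]
  split_ifs
  · simp
  · simpa using (flen_of_le (k := k) (FreeGroup.mk [(j, s)])).trans FreeGroup.norm_mk_le
  · simp

lemma flen_foxCocycle_le (b : Bool) (i : Fin n) (w : FreeGroup (Fin n)) :
    flen (foxCocycle (k := k) b i w) ≤ w.norm := by
  suffices ∀ L, flen (foxCocycle (k := k) b i (FreeGroup.mk L)) ≤ L.length by
    have h := this w.toWord
    rwa [FreeGroup.mk_toWord] at h
  intro L
  induction L with
  | nil => simp [← FreeGroup.one_eq_mk, foxCocycle]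
  | cons x L ih =>
    rw [mk_cons, foxCocycle_mul, List.length_cons]
    refine (flen_add_le _ _).trans (max_le ?_ (ih.trans (Nat.le_succ _)))
    refine (flen_mul_le _ _).trans ?_
    grw [flen_foxCocycle_mk_singleton_le, flen_of_le, FreeGroup.norm_mk_le, add_comm]

def headTerm (b : Bool) (i : Fin n) (w : FreeGroup (Fin n)) : Λ :=
  if w.toWord.head? = some (i, !b) then of k _ w else 0

lemma foxCocycle_add_headTerm_mk_singleton (b : Bool) (i : Fin n) (x : Fin n × Bool) :
    foxCocycle b i (FreeGroup.mk [x]) + headTerm b i (FreeGroup.mk [x]) =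
      if x = (i, b) then (1 : Λ) else 0 := by
  obtain ⟨j, s⟩ := x
  simp only [foxCocycle_mk_singleton, headTerm, toWord_mk_singleton, List.head?_cons,
    Option.some.injEq, Prod.mk.injEq]
  by_cases hji : j = i <;> cases s <;> cases b <;> simp [hji]

lemma flen_foxCocycle_add_headTerm_le (b : Bool) (i : Fin n) (w : FreeGroup (Fin n)) :
    flen (foxCocycle b i w + headTerm (k := k) b i w) ≤ w.norm - 1 := by
  rcases hw : w.toWord with _ | ⟨x, l⟩
  · simp [FreeGroup.toWord_eq_nil_iff.1 hw, headTerm, foxCocycle]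
  · have hwx : w = FreeGroup.mk [x] * FreeGroup.mk l := by
      rw [← FreeGroup.mk_toWord (x := w), hw, mk_cons]
    have hhead : headTerm (k := k) b i w =
        headTerm b i (FreeGroup.mk [x]) * of k _ (FreeGroup.mk l) := by
      simp only [headTerm, hw, toWord_mk_singleton, List.head?_cons]
      split_ifs <;> simp [← hwx]
    have : foxCocycle b i w + headTerm (k := k) b i w =
        (foxCocycle b i (FreeGroup.mk [x]) + headTerm b i (FreeGroup.mk [x])) *
          of k _ (FreeGroup.mk l) + foxCocycle b i (FreeGroup.mk l) := by
      rw [hhead, add_mul]; nth_rw 1 [hwx]; rw [foxCocycle_mul]; abel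
    have hl : w.norm - 1 = l.length := by simp [FreeGroup.norm, hw]
    rw [this, foxCocycle_add_headTerm_mk_singleton, hl]
    refine (flen_add_le _ _).trans (max_le ((flen_mul_le _ _).trans ?_)
      ((flen_foxCocycle_le b i _).trans FreeGroup.norm_mk_le))
    grw [flen_of_le, FreeGroup.norm_mk_le]
    split_ifs <;> simp

variable (k) in
def headPart (b : Bool) (i : Fin n) : Λ →ₗ[k] Λ :=
  (basis _ k).constr k (headTerm b i)

lemma headPart_of (b : Bool) (i : Fin n) (w : FreeGroup (Fin n)) :
    headPart k b i (of k _ w) = headTerm b i w :=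
  (basis _ k).constr_basis k _ w

lemma coeff_headPart (b : Bool) (i : Fin n) (ν : Λ) (u : FreeGroup (Fin n)) :
    (headPart k b i ν).coeff u = if u.toWord.head? = some (i, !b) then ν.coeff u else 0 := by
  induction ν using MonoidAlgebra.induction_on with
  | of w =>
    rw [headPart_of, headTerm]
    by_cases hwu : w = u
    · subst hwu; split_ifs <;> simp
    · split_ifs <;> simp [coeff_single, hwu]
  | add μ ν hμ hν =>
    simp only [map_add, coeff_add, Finsupp.add_apply, hμ, hν]
    split_ifs <;> simp
  | smul r μ hμ =>
    simp only [map_smul, coeff_smul, Finsupp.smul_apply, hμ]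
    split_ifs <;> simp

lemma flen_foxDeriv_le (b : Bool) (i : Fin n) (ν : Λ) :
    flen (foxDeriv k b i ν) ≤ flen ν :=
  (flen_constr_le _ ν).trans (Finset.sup_le fun w hw =>
    (flen_foxCocycle_le b i w).trans (norm_le_flen hw))

lemma flen_foxDeriv_add_headPart_le (b : Bool) (i : Fin n) (ν : Λ) :
    flen (foxDeriv k b i ν + headPart k b i ν) ≤ flen ν - 1 := by
  rw [foxDeriv, headPart, ← LinearMap.add_apply, ← map_add]
  exact (flen_constr_le _ ν).trans (Finset.sup_le fun w hw =>
    (flen_foxCocycle_add_headTerm_le b i w).trans (Nat.sub_le_sub_right (norm_le_flen hw) 1))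

lemma coeff_foxDeriv_of_flen_le (b : Bool) (i : Fin n) {ν : Λ}
    {u : FreeGroup (Fin n)} (hν : flen ν ≤ u.norm) (hu : 1 ≤ u.norm) :
    (foxDeriv k b i ν).coeff u = -if u.toWord.head? = some (i, !b) then ν.coeff u else 0 := by
  have h := coeff_eq_zero_of_flen_lt
    ((flen_foxDeriv_add_headPart_le b i ν).trans_lt (by omega) : _ < u.norm)
  rw [coeff_add, Finsupp.add_apply, coeff_headPart] at h
  exact eq_neg_of_add_eq_zero_left h

section Descent

variable (γ : k[FreeGroup (Fin n)])

/-- The star action of `γ`: `S_i` for `b = true` and `S̄_i` for `b = false`. -/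
def starOp (b : Bool) (i : Fin n) (μ : Λ) : Λ :=
  foxDeriv k b i (μ - freeGroupAug k n μ • γ)

lemma exists_starOp_notMem_span (hγ : freeGroupAug k n γ = 1) (b : Bool)
    {μ : Λ} (hμ : μ ∉ Submodule.span Λ {γ}) :
    ∃ i, starOp γ b i μ ∉ Submodule.span Λ {γ} := by
  refine exists_foxDeriv_notMem b _ (fun h => hμ ?_) (by simp [hγ])
  simpa using add_mem h (Submodule.smul_of_tower_mem _ (freeGroupAug k n μ)
    (Submodule.mem_span_singleton_self γ))

lemma flen_sub_smul_le (μ : Λ) (c : k) :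
    flen (μ - c • γ) ≤ max (flen μ) (flen γ) := by
  rw [sub_eq_add_neg]
  exact (flen_add_le _ _).trans (max_le_max le_rfl ((flen_neg _).trans_le (flen_smul_le c γ)))

lemma flen_starOp_le (b : Bool) (i : Fin n) (μ : Λ) :
    flen (starOp γ b i μ) ≤ max (flen μ) (flen γ) :=
  (flen_foxDeriv_le b i _).trans (flen_sub_smul_le γ μ _)

lemma coeff_starOp (b : Bool) (i : Fin n) {μ : Λ} {u : FreeGroup (Fin n)}
    (hγ : flen γ < u.norm) (hμ : flen μ ≤ u.norm) :
    (starOp γ b i μ).coeff u = -if u.toWord.head? = some (i, !b) then μ.coeff u else 0 := by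
  rw [starOp, coeff_foxDeriv_of_flen_le b i ((flen_sub_smul_le γ μ _).trans (max_le hμ hγ.le))
    (by omega)]
  simp [coeff_eq_zero_of_flen_lt hγ]

def topWords (m : ℕ) (μ : Λ) : Finset (FreeGroup (Fin n)) :=
  μ.coeff.support.filter fun w => w.norm = m

lemma topWords_nonempty {μ : Λ} (hμ : μ ≠ 0) :
    (topWords (flen μ) μ).Nonempty := by
  obtain ⟨w, hw, hsup⟩ := Finset.exists_mem_eq_sup μ.coeff.support
    (Finsupp.support_nonempty_iff.2 (mt coeff_eq_zero.1 hμ)) fun w => w.toWord.length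
  exact ⟨w, Finset.mem_filter.2 ⟨hw, hsup.symm⟩⟩

lemma topWords_starOp (b : Bool) (i : Fin n) {μ : Λ} (hγ : flen γ < flen μ) :
    topWords (flen μ) (starOp γ b i μ) =
      (topWords (flen μ) μ).filter fun u => u.toWord.head? = some (i, !b) := by
  ext u
  simp only [topWords, Finset.mem_filter, Finsupp.mem_support_iff]
  constructor
  · rintro ⟨hu, hnorm⟩
    rw [coeff_starOp γ b i (hnorm ▸ hγ) hnorm.ge] at hu
    split_ifs at hu with hhead
    · exact ⟨⟨neg_ne_zero.1 hu, hnorm⟩, hhead⟩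
    · simp at hu
  · rintro ⟨⟨hu, hnorm⟩, hhead⟩
    rw [coeff_starOp γ b i (hnorm ▸ hγ) hnorm.ge, if_pos hhead]
    exact ⟨neg_ne_zero.2 hu, hnorm⟩

def descentRank (μ : Λ) : ℕ ×ₗ ℕ :=
  toLex (flen μ, (topWords (flen μ) μ).card)

lemma descentRank_starOp_lt {b : Bool} {i : Fin n} {μ : Λ}
    (hγ : flen γ < flen μ) {u : FreeGroup (Fin n)} (hu : u ∈ topWords (flen μ) μ)
    (hhead : u.toWord.head? ≠ some (i, !b)) :
    descentRank (starOp γ b i μ) < descentRank μ := by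
  have hle : flen (starOp γ b i μ) ≤ flen μ := (flen_starOp_le γ b i μ).trans (by omega)
  rw [descentRank, descentRank, Prod.Lex.toLex_lt_toLex]
  rcases hle.lt_or_eq with hlt | heq
  · exact Or.inl hlt
  · refine Or.inr ⟨heq, ?_⟩
    rw [heq, topWords_starOp γ b i hγ]
    exact Finset.card_lt_card (Finset.filter_ssubset.2 ⟨u, hu, hhead⟩)

lemma exists_starOp_descentRank_lt (hγ1 : freeGroupAug k n γ = 1) {μ : Λ}
    (hμ : μ ∉ Submodule.span Λ {γ}) (hγ : flen γ < flen μ) :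
    ∃ b i, starOp γ b i μ ∉ Submodule.span Λ {γ} ∧
      descentRank (starOp γ b i μ) < descentRank μ := by
  obtain ⟨u, hu⟩ := topWords_nonempty fun h : μ = 0 => hμ (h ▸ zero_mem _)
  obtain ⟨i₁, hi₁⟩ := exists_starOp_notMem_span γ hγ1 true hμ
  obtain ⟨i₀, hi₀⟩ := exists_starOp_notMem_span γ hγ1 false hμ
  by_cases hhead : u.toWord.head? = some (i₁, false)
  · refine ⟨false, i₀, hi₀, descentRank_starOp_lt γ hγ hu ?_⟩
    simp [hhead]
  · exact ⟨true, i₁, hi₁, descentRank_starOp_lt γ hγ hu hhead⟩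

theorem exists_starOp_comp (hγ1 : freeGroupAug k n γ = 1) (μ : Λ)
    (hμ : μ ∉ Submodule.span Λ {γ}) :
    ∃ L : List (Bool × Fin n), L ≠ [] ∧
      L.foldl (fun ν p => starOp γ p.1 p.2 ν) μ ∉ Submodule.span Λ {γ} ∧
      flen (L.foldl (fun ν p => starOp γ p.1 p.2 ν) μ) ≤ flen γ := by
  induction μ using (InvImage.wf descentRank wellFounded_lt).induction with
  | _ μ ih =>
    by_cases hγ : flen γ < flen μ
    · obtain ⟨b, i, hS, hlt⟩ := exists_starOp_descentRank_lt γ hγ1 hμ hγ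
      obtain ⟨L, -, hL⟩ := ih _ hlt hS
      exact ⟨(b, i) :: L, List.cons_ne_nil _ _, hL⟩
    · obtain ⟨i, hi⟩ := exists_starOp_notMem_span γ hγ1 true hμ
      exact ⟨[(true, i)], List.cons_ne_nil _ _, hi,
        (flen_starOp_le γ true i μ).trans (max_le (not_lt.1 hγ) le_rfl)⟩

end Descent

end FinRank

end Fox

theorem stmt16_general (k : Type*) [Field k] (n : ℕ)
    (D Db : Fin n → MonoidAlgebra k (FreeGroup (Fin n)) → MonoidAlgebra k (FreeGroup (Fin n)))
    (hD : ∀ γ : MonoidAlgebra k (FreeGroup (Fin n)),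
      γ = freeGroupAug k n γ • (1 : MonoidAlgebra k (FreeGroup (Fin n)))
        + ∑ i : Fin n,
            ((MonoidAlgebra.of k (FreeGroup (Fin n)) (FreeGroup.of i)
              : MonoidAlgebra k (FreeGroup (Fin n))) - 1) * D i γ)
    (hDb : ∀ γ : MonoidAlgebra k (FreeGroup (Fin n)),
      γ = freeGroupAug k n γ • (1 : MonoidAlgebra k (FreeGroup (Fin n)))
        + ∑ i : Fin n,
            ((MonoidAlgebra.of k (FreeGroup (Fin n)) (FreeGroup.of i)⁻¹
              : MonoidAlgebra k (FreeGroup (Fin n))) - 1) * Db i γ)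
    (γ : MonoidAlgebra k (FreeGroup (Fin n))) (hγ : freeGroupAug k n γ = 1)
    (lam : MonoidAlgebra k (FreeGroup (Fin n)))
    (hlam : lam ∉ Submodule.span (MonoidAlgebra k (FreeGroup (Fin n))) {γ}) :
    ∃ L : List (MonoidAlgebra k (FreeGroup (Fin n)) → MonoidAlgebra k (FreeGroup (Fin n))),
      L ≠ [] ∧
      (∀ g ∈ L,
        (∃ i, g = fun μ => D i (μ - freeGroupAug k n μ • γ)) ∨
        (∃ i, g = fun μ => Db i (μ - freeGroupAug k n μ • γ))) ∧
      L.foldl (fun x g => g x) lam ∉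
        Submodule.span (MonoidAlgebra k (FreeGroup (Fin n))) {γ} ∧
      flen (L.foldl (fun x g => g x) lam) ≤ flen γ := by
  obtain rfl : D = fun i μ => Fox.foxDeriv k true i μ :=
    funext (Fox.foxDeriv_unique true D hD)
  obtain rfl : Db = fun i μ => Fox.foxDeriv k false i μ :=
    funext (Fox.foxDeriv_unique false Db (by simpa only [Fox.mk_singleton_false] using hDb))
  obtain ⟨L, hL, hnot, hlen⟩ := Fox.exists_starOp_comp γ hγ lam hlam
  refine ⟨L.map fun p => Fox.starOp γ p.1 p.2, by simpa using hL, ?_, ?_⟩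
  · simp only [List.mem_map]
    rintro _ ⟨⟨_ | _, i⟩, -, rfl⟩
    exacts [Or.inr ⟨i, rfl⟩, Or.inl ⟨i, rfl⟩]
  · rw [List.foldl_map]
    exact ⟨hnot, hlen⟩

/-- For a comonic free polynomial `γ` and any `λ ∉ Λγ`, some nonempty composition of the
star-action operators `S i : λ ↦ D i (λ - ε(λ)γ)` and `S̄ i : λ ↦ D̄ i (λ - ε(λ)γ)` sends
`λ` outside `Λγ` to an element of length at most `ℓ(γ)`. -/
theorem stmt16 (k : Type*) [Field k] (n : ℕ) (hn : 2 ≤ n)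
    (D Db : Fin n → MonoidAlgebra k (FreeGroup (Fin n)) → MonoidAlgebra k (FreeGroup (Fin n)))
    (hD : ∀ γ : MonoidAlgebra k (FreeGroup (Fin n)),
      γ = freeGroupAug k n γ • (1 : MonoidAlgebra k (FreeGroup (Fin n)))
        + ∑ i : Fin n,
            ((MonoidAlgebra.of k (FreeGroup (Fin n)) (FreeGroup.of i)
              : MonoidAlgebra k (FreeGroup (Fin n))) - 1) * D i γ)
    (hDb : ∀ γ : MonoidAlgebra k (FreeGroup (Fin n)),
      γ = freeGroupAug k n γ • (1 : MonoidAlgebra k (FreeGroup (Fin n)))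
        + ∑ i : Fin n,
            ((MonoidAlgebra.of k (FreeGroup (Fin n)) (FreeGroup.of i)⁻¹
              : MonoidAlgebra k (FreeGroup (Fin n))) - 1) * Db i γ)
    (γ : MonoidAlgebra k (FreeGroup (Fin n))) (hγ : freeGroupAug k n γ = 1)
    (lam : MonoidAlgebra k (FreeGroup (Fin n)))
    (hlam : lam ∉ Submodule.span (MonoidAlgebra k (FreeGroup (Fin n))) {γ}) :
    ∃ L : List (MonoidAlgebra k (FreeGroup (Fin n)) → MonoidAlgebra k (FreeGroup (Fin n))),
      L ≠ [] ∧
      (∀ g ∈ L,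
        (∃ i, g = fun μ => D i (μ - freeGroupAug k n μ • γ)) ∨
        (∃ i, g = fun μ => Db i (μ - freeGroupAug k n μ • γ))) ∧
      L.foldl (fun x g => g x) lam ∉
        Submodule.span (MonoidAlgebra k (FreeGroup (Fin n))) {γ} ∧
      flen (L.foldl (fun x g => g x) lam) ≤ flen γ :=
  stmt16_general k n D Db hD hDb γ hγ lam hlam
end
end
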